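/- Let a : Fin n → ℝ be fixed, 1 < k ≤ n, n ≥ 2, and S a uniformly random k-element subset of Fin n. Let T = (1/k) Σ_{i∈S} a i and define the variance estimator V̂ = (1 − k/n) · Σ_{i∈S} (a i − T)² / ((k−1)·k). Then E[V̂] = Var(T). -/

import Mathlib

/-!
Write `X = ∑ i ∈ S, a i`. A fixed unit lies in `S` with probability `k / n`, and a fixed
ordered pair of distinct units with probability `k (k - 1) / (n (n - 1))`; expanding `X ^ 2`
over the diagonal and the off-diagonal pairs of `S` thus gives `E[X]` and `E[X ^ 2]` in terms
of `∑ a i` and `∑ a i ^ 2`. Since the within-sample sum of squares is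
`∑ i ∈ S, a i ^ 2 - X ^ 2 / k`, both the expected estimator and
`Var(X / k) = (E[X ^ 2] - E[X] ^ 2) / k ^ 2` become explicit combinations of these two sums,
and they agree.
-/

open Finset

/-- Expectation of a real-valued function of a uniformly random `k`-element subset of `Fin n`. -/
noncomputable def pexp (n k : ℕ) (f : Finset (Fin n) → ℝ) : ℝ :=
  (∑ S ∈ (univ : Finset (Fin n)).powersetCard k, f S) /
    (((univ : Finset (Fin n)).powersetCard k).card : ℝ)

theorem sum_sub_div_card_sq {ι K : Type*} [Field K] [CharZero K] (s : Finset ι) (f : ι → K) :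
    ∑ i ∈ s, (f i - (∑ j ∈ s, f j) / #s) ^ 2
      = ∑ i ∈ s, f i ^ 2 - (∑ i ∈ s, f i) ^ 2 / #s := by
  rcases s.eq_empty_or_nonempty with rfl | hs
  · simp
  have hs0 : (#s : K) ≠ 0 := by exact_mod_cast hs.card_pos.ne'
  simp only [sub_sq, sum_add_distrib, sum_sub_distrib, ← sum_mul, ← mul_sum, sum_const,
    nsmul_eq_mul]
  field_simp
  ring

section Sums

variable {ι : Type*} [DecidableEq ι]

theorem sq_sum_eq_sum_sq_add_sum_offDiag {R : Type*} [CommSemiring R] (s : Finset ι)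
    (f : ι → R) :
    (∑ i ∈ s, f i) ^ 2 = ∑ i ∈ s, f i ^ 2 + ∑ p ∈ s.offDiag, f p.1 * f p.2 := by
  rw [sq, sum_mul_sum, ← sum_product', ← diag_union_offDiag,
    sum_union (disjoint_diag_offDiag s), sum_diag]
  simp only [sq]

variable {M : Type*} [AddCommMonoid M] {s : Finset ι} {k : ℕ}

theorem sum_powersetCard_sum (hk : 1 ≤ k) (f : ι → M) :
    ∑ S ∈ s.powersetCard k, ∑ i ∈ S, f i = (#s - 1).choose (k - 1) • ∑ i ∈ s, f i := by
  rw [sum_comm' (t' := s) (s' := fun i => (s.powersetCard k).filter ({i} ⊆ ·))]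
  · rw [smul_sum]
    refine sum_congr rfl fun i hi => ?_
    rw [sum_const, card_filter_powersetCard_subset _ _ _ (singleton_subset_iff.2 hi)
      (by simpa using hk), card_singleton]
  · intro S i
    simp only [mem_filter, mem_powersetCard, singleton_subset_iff]
    grind

theorem sum_powersetCard_sum_offDiag (hk : 2 ≤ k) (g : ι × ι → M) :
    ∑ S ∈ s.powersetCard k, ∑ p ∈ S.offDiag, g p
      = (#s - 2).choose (k - 2) • ∑ p ∈ s.offDiag, g p := by
  rw [sum_comm' (t' := s.offDiag) (s' := fun p => (s.powersetCard k).filter ({p.1, p.2} ⊆ ·))]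
  · rw [smul_sum]
    refine sum_congr rfl fun p hp => ?_
    obtain ⟨h1, h2, hne⟩ := mem_offDiag.1 hp
    rw [sum_const, card_filter_powersetCard_subset _ _ _ (by simp [insert_subset_iff, h1, h2])
      (by rwa [card_pair hne]), card_pair hne]
  · intro S p
    simp only [mem_filter, mem_powersetCard, mem_offDiag, insert_subset_iff,
      singleton_subset_iff]
    grind

end Sums

theorem choose_sub_one_div_choose {K : Type*} [Field K] [CharZero K] {n k : ℕ} (hk : 1 ≤ k)
    (hkn : k ≤ n) : ((n - 1).choose (k - 1) : K) / n.choose k = k / n := by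
  have h := Nat.add_one_mul_choose_eq (n - 1) (k - 1)
  rw [Nat.sub_add_cancel (hk.trans hkn), Nat.sub_add_cancel hk] at h
  have hn : (n : K) ≠ 0 := by exact_mod_cast (by omega : n ≠ 0)
  have hc : (n.choose k : K) ≠ 0 := by exact_mod_cast (Nat.choose_pos hkn).ne'
  rw [div_eq_div_iff hc hn]
  exact_mod_cast (by linarith : (n - 1).choose (k - 1) * n = k * n.choose k)

theorem choose_sub_two_div_choose {K : Type*} [Field K] [CharZero K] {n k : ℕ} (hk : 2 ≤ k)
    (hkn : k ≤ n) : ((n - 2).choose (k - 2) : K) / n.choose k = k * (k - 1) / (n * (n - 1)) := by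
  have hc : ((n - 1).choose (k - 1) : K) ≠ 0 := by exact_mod_cast (Nat.choose_pos (by omega)).ne'
  have h : ((n - 2).choose (k - 2) : K) / (n - 1).choose (k - 1) = (k - 1) / (n - 1) := by
    have := choose_sub_one_div_choose (K := K) (n := n - 1) (k := k - 1) (by omega) (by omega)
    rwa [Nat.sub_sub, Nat.sub_sub, Nat.cast_pred (by omega), Nat.cast_pred (by omega)] at this
  rw [← div_mul_div_cancel₀ hc, h, choose_sub_one_div_choose (by omega) hkn, div_mul_div_comm,
    mul_comm ((k : K) - 1), mul_comm ((n : K) - 1)]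

section Expectation

variable {n k : ℕ}

theorem pexp_congr {f g : Finset (Fin n) → ℝ}
    (h : ∀ S ∈ (univ : Finset (Fin n)).powersetCard k, f S = g S) : pexp n k f = pexp n k g := by
  rw [pexp, pexp, sum_congr rfl h]

theorem pexp_add (f g : Finset (Fin n) → ℝ) :
    pexp n k (fun S => f S + g S) = pexp n k f + pexp n k g := by
  rw [pexp, pexp, pexp, sum_add_distrib, add_div]

theorem pexp_sub (f g : Finset (Fin n) → ℝ) :
    pexp n k (fun S => f S - g S) = pexp n k f - pexp n k g := by
  rw [pexp, pexp, pexp, sum_sub_distrib, sub_div]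

theorem pexp_const_mul (c : ℝ) (f : Finset (Fin n) → ℝ) :
    pexp n k (fun S => c * f S) = c * pexp n k f := by
  rw [pexp, pexp, ← mul_sum, mul_div_assoc]

theorem pexp_const (hkn : k ≤ n) (c : ℝ) : pexp n k (fun _ => c) = c := by
  have h : (#((univ : Finset (Fin n)).powersetCard k) : ℝ) ≠ 0 := by
    rw [card_powersetCard, card_univ, Fintype.card_fin]
    exact_mod_cast (Nat.choose_pos hkn).ne'
  rw [pexp, sum_const, nsmul_eq_mul, mul_div_cancel_left₀ _ h]

theorem pexp_sub_pexp_sq (hkn : k ≤ n) (f : Finset (Fin n) → ℝ) :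
    pexp n k (fun S => (f S - pexp n k f) ^ 2)
      = pexp n k (fun S => f S ^ 2) - pexp n k f ^ 2 := by
  simp_rw [sub_sq, mul_right_comm (2 : ℝ) (f _)]
  rw [pexp_add, pexp_sub, pexp_const_mul, pexp_const hkn]
  ring

theorem pexp_sum (hk : 1 ≤ k) (hkn : k ≤ n) (f : Fin n → ℝ) :
    pexp n k (fun S => ∑ i ∈ S, f i) = k / n * ∑ i, f i := by
  rw [pexp, sum_powersetCard_sum hk, card_powersetCard, card_univ, Fintype.card_fin,
    nsmul_eq_mul, mul_div_right_comm, choose_sub_one_div_choose hk hkn]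

theorem pexp_sum_offDiag (hk : 2 ≤ k) (hkn : k ≤ n) (g : Fin n × Fin n → ℝ) :
    pexp n k (fun S => ∑ p ∈ S.offDiag, g p)
      = k * (k - 1) / (n * (n - 1)) * ∑ p ∈ univ.offDiag, g p := by
  rw [pexp, sum_powersetCard_sum_offDiag hk, card_powersetCard, card_univ, Fintype.card_fin,
    nsmul_eq_mul, mul_div_right_comm, choose_sub_two_div_choose hk hkn]

theorem pexp_sq_sum (hk : 2 ≤ k) (hkn : k ≤ n) (a : Fin n → ℝ) :
    pexp n k (fun S => (∑ i ∈ S, a i) ^ 2)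
      = k / n * ∑ i, a i ^ 2
        + k * (k - 1) / (n * (n - 1)) * ((∑ i, a i) ^ 2 - ∑ i, a i ^ 2) := by
  have hoff : ∑ p ∈ univ.offDiag, a p.1 * a p.2 = (∑ i, a i) ^ 2 - ∑ i, a i ^ 2 := by
    rw [sq_sum_eq_sum_sq_add_sum_offDiag]
    ring
  conv_lhs => simp only [sq_sum_eq_sum_sq_add_sum_offDiag]
  rw [pexp_add, pexp_sum (by omega) hkn, pexp_sum_offDiag hk hkn, hoff]

end Expectation

theorem variance_estimator_unbiased_general (n k : ℕ) (a : Fin n → ℝ)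
    (hk1 : 1 < k) (hk : k ≤ n) :
    pexp n k (fun S =>
        (1 - (k : ℝ) / (n : ℝ)) *
          (∑ i ∈ S, (a i - (1 / (k : ℝ)) * ∑ i' ∈ S, a i') ^ 2) /
          (((k : ℝ) - 1) * (k : ℝ))) =
      pexp n k (fun S =>
        ((1 / (k : ℝ)) * ∑ i ∈ S, a i -
          pexp n k (fun S' => (1 / (k : ℝ)) * ∑ i ∈ S', a i)) ^ 2) := by
  have hk0 : (k : ℝ) ≠ 0 := by positivity
  have hk1₀ : (k : ℝ) - 1 ≠ 0 := sub_ne_zero.2 (by exact_mod_cast hk1.ne')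
  have hn0 : (n : ℝ) ≠ 0 := by exact_mod_cast (by omega : n ≠ 0)
  have hn1₀ : (n : ℝ) - 1 ≠ 0 := sub_ne_zero.2 (by exact_mod_cast (by omega : n ≠ 1))
  have hdev : ∀ S ∈ (univ : Finset (Fin n)).powersetCard k,
      (1 - (k : ℝ) / n) * (∑ i ∈ S, (a i - 1 / (k : ℝ) * ∑ i' ∈ S, a i') ^ 2) / ((k - 1) * k)
        = (1 - (k : ℝ) / n) / ((k - 1) * k)
          * (∑ i ∈ S, a i ^ 2 - 1 / (k : ℝ) * (∑ i ∈ S, a i) ^ 2) := by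
    intro S hS
    have hcard : (#S : ℝ) = k := by exact_mod_cast (mem_powersetCard.1 hS).2
    rw [one_div_mul_eq_div, ← hcard, sum_sub_div_card_sq]
    ring
  rw [pexp_congr hdev, pexp_const_mul, pexp_sub, pexp_const_mul, pexp_sub_pexp_sq hk]
  simp_rw [mul_pow]
  rw [pexp_const_mul, pexp_const_mul, pexp_sum (by omega) hk, pexp_sum (by omega) hk,
    pexp_sq_sum hk1 hk]
  field_simp
  ring

/-- For `T = (1/k) Σ_{i∈S} a i` with `S` a uniformly random `k`-subset of
`Fin n` (`1 < k ≤ n`, `n ≥ 2`), the variance estimator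
`V̂ = (1 − k/n) · Σ_{i∈S} (a i − T)² / ((k−1)·k)` is unbiased for `Var(T)`. -/
theorem variance_estimator_unbiased (n k : ℕ) (a : Fin n → ℝ)
    (hk1 : 1 < k) (hk : k ≤ n) (hn : 2 ≤ n) :
    pexp n k (fun S =>
        (1 - (k : ℝ) / (n : ℝ)) *
          (∑ i ∈ S, (a i - (1 / (k : ℝ)) * ∑ i' ∈ S, a i') ^ 2) /
          (((k : ℝ) - 1) * (k : ℝ))) =
      pexp n k (fun S =>
        ((1 / (k : ℝ)) * ∑ i ∈ S, a i -
          pexp n k (fun S' => (1 / (k : ℝ)) * ∑ i ∈ S', a i)) ^ 2) :=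
  variance_estimator_unbiased_general n k a hk1 hk
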